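/- arXiv:2107.08428 — 3 statements merged into one kernel-verified Lean document; each statement's English description precedes it below -/
import Mathlib

section
/- Let V be a locally finite game graph and x ∈ V. Then either 𝒢ₙ(x) = ∞ for all n, or there exist m ∈ ℕ and n₀ ∈ ℕ such that 𝒢ₙ(x) = ∞ for all n < n₀ and 𝒢ₙ(x) = m for all n ≥ n₀. -/
open scoped Classical

universe u

/-- `PosP Γ n` is the set `Pₙ` of positions from which the second player can win
within `n` rounds: `P₀` is the set of terminal positions, and
`Pₙ₊₁ = {x : every option of x has an option in Pₙ}`. -/
def PosP {V : Type*} (Γ : V → Finset V) : ℕ → Set V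
  | 0 => {x | Γ x = ∅}
  | n + 1 => {x | ∀ y ∈ Γ x, ∃ z ∈ Γ y, z ∈ PosP Γ n}

/-- `PosN Γ n` is the set `Nₙ`: for `n ≥ 1`, `Nₙ = {x : some option of x lies in Pₙ₋₁}`. -/
def PosN {V : Type*} (Γ : V → Finset V) : ℕ → Set V
  | 0 => ∅
  | n + 1 => {x | ∃ y ∈ Γ x, y ∈ PosP Γ n}

/-- The P-positions `𝒫 = ⋃ₙ Pₙ` (second player wins). -/
def PPos {V : Type*} (Γ : V → Finset V) : Set V := ⋃ n, PosP Γ n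

/-- The N-positions `𝒩 = ⋃ₙ Nₙ` (first player wins). -/
def NPos {V : Type*} (Γ : V → Finset V) : Set V := ⋃ n, PosN Γ n

/-- The D-positions `𝒟 = V ∖ (𝒫 ∪ 𝒩)` (draws). -/
def DPos {V : Type*} (Γ : V → Finset V) : Set V := (PPos Γ ∪ NPos Γ)ᶜ

/-- The mex (least natural number not attained) of the values `g y`, `y ∈ s`. -/
noncomputable def mexF {V : Type*} (s : Finset V) (g : V → ℕ∞) : ℕ :=
  sInf {n : ℕ | ∀ y ∈ s, g y ≠ (n : ℕ∞)}

/-- The approximants `𝒢ₙ` of the extended Sprague-Grundy function. -/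
noncomputable def Gfun {V : Type*} (Γ : V → Finset V) : ℕ → V → ℕ∞
  | 0 => fun x => if Γ x = ∅ then 0 else ⊤
  | n + 1 => fun x =>
      let m := mexF (Γ x) (Gfun Γ n)
      if ∀ y ∈ Γ x, Gfun Γ n y ≤ (m : ℕ∞) ∨ ∃ z ∈ Γ y, Gfun Γ n z = (m : ℕ∞)
      then (m : ℕ∞) else ⊤

/-- `x` has finite rank with (finite) Sprague-Grundy value `m`:
`𝒢ₙ(x) = m` for all sufficiently large `n`. -/
def HasGVal {V : Type*} (Γ : V → Finset V) (x : V) (m : ℕ) : Prop :=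
  ∃ n₀ : ℕ, ∀ n ≥ n₀, Gfun Γ n x = (m : ℕ∞)

/-- `x` has infinite rank: `𝒢ₙ(x) = ∞` for all `n`. -/
def InfiniteRank {V : Type*} (Γ : V → Finset V) (x : V) : Prop :=
  ∀ n : ℕ, Gfun Γ n x = ⊤

/-- The rank of `x`: the least `n` with `𝒢ₙ(x) < ∞`, or `∞` if there is none. -/
noncomputable def rank {V : Type*} (Γ : V → Finset V) (x : V) : ℕ∞ :=
  sInf ((↑) '' {n : ℕ | Gfun Γ n x ≠ ⊤})

/-- For `x` of infinite rank, the set `𝒜` with `𝒢(x) = ∞(𝒜)`: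
the set of finite Sprague-Grundy values of finite-rank options of `x`. -/
def ValSet {V : Type*} (Γ : V → Finset V) (x : V) : Set ℕ :=
  {a | ∃ y ∈ Γ x, HasGVal Γ y a}

/-- The graph of the disjunctive sum: move in exactly one coordinate. -/
noncomputable def sumGraph {V W : Type*} (Γ : V → Finset V) (Δ : W → Finset W) :
    V × W → Finset (V × W) := fun p =>
  (Γ p.1).image (fun u => (u, p.2)) ∪ (Δ p.2).image (fun w => (p.1, w))

/-- Two (positions of possibly different) games lie in the same outcome class. -/
def SameOutcome {V W : Type*} (Γ : V → Finset V) (x : V) (Δ : W → Finset W) (y : W) : Prop :=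
  (x ∈ PPos Γ ↔ y ∈ PPos Δ) ∧ (x ∈ NPos Γ ↔ y ∈ NPos Δ) ∧ (x ∈ DPos Γ ↔ y ∈ DPos Δ)

/-- Equivalence of games: `G + X` and `H + X` have the same outcome for every
locally finite game `X`. -/
def GameEquiv {V W : Type*} (Γ : V → Finset V) (x : V) (Δ : W → Finset W) (y : W) : Prop :=
  ∀ (X : Type u) (Ξ : X → Finset X) (z : X),
    SameOutcome (sumGraph Γ Ξ) (x, z) (sumGraph Δ Ξ) (y, z)

/-- The nim heap `*m`: positions `0, …, m`, where from `k` one can move to any `j < k`. -/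
def nimGraph (m : ℕ) : Fin (m + 1) → Finset (Fin (m + 1)) :=
  fun k => Finset.univ.filter (fun j => j < k)

/-- The reduced graph `R(V)`: the induced graph on the complement of the P-positions. -/
noncomputable def reducedGraph {V : Type*} (Γ : V → Finset V) :
    {x : V // x ∉ PPos Γ} → Finset {x : V // x ∉ PPos Γ} := fun x =>
  (Γ x.1).subtype (fun y => y ∉ PPos Γ)

/-- The vertex set of `R^{(k)}(V)`: positions which do not have finite rank with
Sprague-Grundy value `< k`. -/
def RkSet {V : Type*} (Γ : V → Finset V) (k : ℕ) : Set V :=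
  {x | ¬ ∃ m < k, HasGVal Γ x m}

/-- The induced game graph `R^{(k)}(V)` on `RkSet Γ k`. -/
noncomputable def RkGraph {V : Type*} (Γ : V → Finset V) (k : ℕ) :
    RkSet Γ k → Finset (RkSet Γ k) := fun x =>
  (Γ x.1).subtype (fun y => y ∈ RkSet Γ k)

/-- `V` is `k`-stable: every infinite-rank position `x`, with `𝒢(x) = ∞(𝒜)`,
has `{0, 1, …, k} ⊆ 𝒜`. -/
def kStable {V : Type*} (Γ : V → Finset V) (k : ℕ) : Prop :=
  ∀ x, InfiniteRank Γ x → ∀ j ≤ k, j ∈ ValSet Γ x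

/-- `l` is a directed walk from `o` to `x` in the graph `Γ`. -/
def IsWalk {V : Type*} (Γ : V → Finset V) (o x : V) (l : List V) : Prop :=
  l.head? = some o ∧ l.getLast? = some x ∧ l.Chain' (fun a b => b ∈ Γ a)

/-- `Γ` is a tree with root `o`: `o` has no incoming arcs, and every vertex is
reached from `o` by a unique directed walk. -/
def IsTree {V : Type*} (Γ : V → Finset V) (o : V) : Prop :=
  (∀ x, o ∉ Γ x) ∧ ∀ x, ∃! l : List V, IsWalk Γ o x l

/-- `f` is a mex labelling: `f x` is the least natural number not attained by `f`
on the options of `x`, for every `x`. -/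
def MexLabelling {V : Type*} (Γ : V → Finset V) (f : V → ℕ) : Prop :=
  ∀ x, f x = sInf {n : ℕ | ∀ y ∈ Γ x, f y ≠ n}

/-!
Once `𝒢ₙ(x)` is finite it never changes again, which we prove by induction on `n`
simultaneously for all positions. Suppose `𝒢ₙ₊₁(x) = m`. Options `y` of `x` with
`𝒢ₙ(y) ≤ m` keep their value by induction; an option `y` having an option `z` with
`𝒢ₙ(z) = m` keeps that witness, and cannot itself take the value `m` at stage `n + 1`,
because its mex omits `m`. Hence the mex at `x` and the side condition for `x` are the
same at stages `n` and `n + 1`. The theorem follows by taking `n₀` least with `𝒢ₙ₀(x) < ∞`.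
-/

section Mex

variable {V : Type*} (s : Finset V) (g : V → ℕ∞)

lemma mexF_set_nonempty : {n : ℕ | ∀ y ∈ s, g y ≠ (n : ℕ∞)}.Nonempty := by
  have hfin : ((↑) ⁻¹' (s.image g : Set ℕ∞) : Set ℕ).Finite :=
    (s.image g).finite_toSet.preimage Nat.cast_injective.injOn
  obtain ⟨n, hn⟩ := hfin.infinite_compl.nonempty
  exact ⟨n, fun y hy hyn => hn (by simpa [← hyn] using ⟨y, hy, rfl⟩)⟩

lemma mexF_ne {y : V} (hy : y ∈ s) : g y ≠ (mexF s g : ℕ∞) :=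
  Nat.sInf_mem (mexF_set_nonempty s g) y hy

lemma mexF_le_of_forall_ne {j : ℕ} (hj : ∀ y ∈ s, g y ≠ (j : ℕ∞)) : mexF s g ≤ j :=
  Nat.sInf_le hj

lemma exists_eq_of_lt_mexF {j : ℕ} (hj : j < mexF s g) : ∃ y ∈ s, g y = (j : ℕ∞) := by
  by_contra! h
  exact (mexF_le_of_forall_ne s g h).not_gt hj

@[simp]
lemma mexF_empty : mexF (∅ : Finset V) g = 0 :=
  Nat.sInf_eq_zero.2 (Or.inl fun _ hy => absurd hy (Finset.notMem_empty _))

lemma mexF_congr {g' : V → ℕ∞} (hagree : ∀ y ∈ s, g y < mexF s g → g' y = g y)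
    (hne : ∀ y ∈ s, g' y ≠ (mexF s g : ℕ∞)) : mexF s g' = mexF s g := by
  refine le_antisymm (mexF_le_of_forall_ne s g' hne) (not_lt.1 fun hlt => ?_)
  obtain ⟨y, hy, hgy⟩ := exists_eq_of_lt_mexF s g hlt
  refine mexF_ne s g' hy ?_
  rw [hagree y hy (hgy ▸ ENat.natCast_lt_natCast.2 hlt), hgy]

end Mex

section Gfun

variable {V : Type*} (Γ : V → Finset V)

lemma gfun_succ (n : ℕ) (x : V) :
    Gfun Γ (n + 1) x =
      if ∀ y ∈ Γ x, Gfun Γ n y ≤ (mexF (Γ x) (Gfun Γ n) : ℕ∞) ∨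
          ∃ z ∈ Γ y, Gfun Γ n z = (mexF (Γ x) (Gfun Γ n) : ℕ∞)
      then (mexF (Γ x) (Gfun Γ n) : ℕ∞) else ⊤ := rfl

lemma gfun_of_options_empty {x : V} (hx : Γ x = ∅) : ∀ n, Gfun Γ n x = 0
  | 0 => by simp [Gfun, hx]
  | n + 1 => by simp [gfun_succ, hx]

lemma options_empty_of_gfun_zero_ne_top {x : V} (hx : Gfun Γ 0 x ≠ ⊤) : Γ x = ∅ := by
  by_contra h
  simp [Gfun, h] at hx

lemma gfun_succ_ne_of_mem {n m : ℕ} {y z : V} (hz : z ∈ Γ y) (hzm : Gfun Γ n z = (m : ℕ∞)) :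
    Gfun Γ (n + 1) y ≠ (m : ℕ∞) := by
  have := mexF_ne (Γ y) (Gfun Γ n) hz
  rw [gfun_succ]
  split_ifs
  · exact fun h => this (hzm.trans h.symm)
  · exact ENat.top_ne_natCast m

theorem gfun_succ_eq_of_ne_top :
    ∀ (n : ℕ) (x : V), Gfun Γ n x ≠ ⊤ → Gfun Γ (n + 1) x = Gfun Γ n x
  | 0, x, hx => by
    have hΓ := options_empty_of_gfun_zero_ne_top Γ hx
    rw [gfun_of_options_empty Γ hΓ, gfun_of_options_empty Γ hΓ]
  | n + 1, x, hx => by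
    have ih := gfun_succ_eq_of_ne_top n
    set m := mexF (Γ x) (Gfun Γ n) with hm
    have hcond : ∀ y ∈ Γ x, Gfun Γ n y ≤ (m : ℕ∞) ∨ ∃ z ∈ Γ y, Gfun Γ n z = (m : ℕ∞) := by
      by_contra h
      exact hx (by rw [gfun_succ, ← hm, if_neg h])
    have hval : Gfun Γ (n + 1) x = (m : ℕ∞) := by rw [gfun_succ, ← hm, if_pos hcond]
    have hkeep : ∀ y, Gfun Γ n y ≤ (m : ℕ∞) → Gfun Γ (n + 1) y = Gfun Γ n y :=
      fun y hy => ih y (ne_top_of_le_ne_top (ENat.natCast_ne_top m) hy)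
    have hmex : mexF (Γ x) (Gfun Γ (n + 1)) = m := by
      refine mexF_congr _ _ (fun y _ hy => hkeep y hy.le) fun y hy => ?_
      rcases hcond y hy with hle | ⟨z, hz, hzm⟩
      · rw [hkeep y hle]
        exact mexF_ne _ _ hy
      · exact gfun_succ_ne_of_mem Γ hz hzm
    have hcond' : ∀ y ∈ Γ x, Gfun Γ (n + 1) y ≤ (m : ℕ∞) ∨
        ∃ z ∈ Γ y, Gfun Γ (n + 1) z = (m : ℕ∞) := by
      refine fun y hy => (hcond y hy).imp (fun hle => (hkeep y hle).trans_le hle) ?_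
      rintro ⟨z, hz, hzm⟩
      exact ⟨z, hz, (hkeep z hzm.le).trans hzm⟩
    rw [hval, gfun_succ, hmex, if_pos hcond']

theorem gfun_eq_of_le {n k : ℕ} {x : V} (hx : Gfun Γ n x ≠ ⊤) (hnk : n ≤ k) :
    Gfun Γ k x = Gfun Γ n x := by
  induction k, hnk using Nat.le_induction with
  | base => rfl
  | succ k _ ih => rw [gfun_succ_eq_of_ne_top Γ k x (ih ▸ hx), ih]

end Gfun

/-- for each `x`, either `𝒢ₙ(x) = ∞` for all `n`, or there are
`m, n₀` with `𝒢ₙ(x) = ∞` for `n < n₀` and `𝒢ₙ(x) = m` for `n ≥ n₀`. -/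
theorem stmt1 {V : Type*} (Γ : V → Finset V) (x : V) :
    (∀ n : ℕ, Gfun Γ n x = ⊤) ∨
    ∃ (m n₀ : ℕ), (∀ n < n₀, Gfun Γ n x = ⊤) ∧ ∀ n ≥ n₀, Gfun Γ n x = (m : ℕ∞) := by
  by_cases h : ∀ n, Gfun Γ n x = ⊤
  · exact Or.inl h
  push Not at h
  obtain ⟨m, hm⟩ := ENat.ne_top_iff_exists.1 (Nat.find_spec h)
  refine Or.inr ⟨m, Nat.find h, fun n hn => not_not.1 (Nat.find_min h hn), fun n hn => ?_⟩
  rw [gfun_eq_of_le Γ (Nat.find_spec h) hn, hm]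
end

section
/- Let V be a locally finite game graph and x ∈ V. Then: (a) 𝒢(x) = 0 if and only if x is a P-position; (b) if 𝒢(x) is a positive integer, then x is an N-position; (c) if 𝒢(x) = ∞(𝒜) for a set 𝒜 with 0 ∈ 𝒜, then x is an N-position; (d) 𝒢(x) = ∞(𝒜) for some 𝒜 with 0 ∉ 𝒜 if and only if x is a D-position. -/
open scoped Classical

universe u

/-!
Both the outcome classes and the approximants `𝒢ₙ` are computed by the same backward
induction, so one proves by induction on `n` that `𝒢ₙ(x) = 0` exactly when `x ∈ Pₙ`: the
zero test in the definition of `𝒢ₙ₊₁` is the defining condition of `Pₙ₊₁`, once one knows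
that an option of a `Pₙ₊₁`-position is never in `Pₙ`. A positive finite value `𝒢ₙ₊₁(x) = m`
has `0` below its mex, hence an option with `𝒢ₙ = 0`, i.e. in `Pₙ`, so `x ∈ 𝒩`. Thus finite
rank forces `x ∈ 𝒫 ∪ 𝒩`, and an infinite-rank position is an N-position exactly when it
has a `𝒫`-option, which by (a) means `0 ∈ 𝒜`.
-/

section

variable {V : Type*}

lemma exists_natCast_forall_ne (s : Finset V) (g : V → ℕ∞) :
    ∃ n : ℕ, ∀ y ∈ s, g y ≠ n := by
  obtain ⟨n, hn⟩ := Infinite.exists_notMem_finset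
    ((s.image g).preimage ((↑) : ℕ → ℕ∞) Nat.cast_injective.injOn)
  exact ⟨n, fun y hy hgy => hn (by simpa using ⟨y, hy, hgy⟩)⟩

lemma apply_ne_mexF {s : Finset V} {g : V → ℕ∞} {y : V} (hy : y ∈ s) :
    g y ≠ mexF s g :=
  Nat.sInf_mem (exists_natCast_forall_ne s g) y hy

lemma exists_apply_eq_of_lt_mexF {s : Finset V} {g : V → ℕ∞} {k : ℕ} (hk : k < mexF s g) :
    ∃ y ∈ s, g y = k := by
  simpa using Nat.notMem_of_lt_sInf hk

lemma mexF_eq_zero_iff {s : Finset V} {g : V → ℕ∞} : mexF s g = 0 ↔ ∀ y ∈ s, g y ≠ 0 := by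
  refine ⟨fun h y hy => by simpa [h] using apply_ne_mexF (g := g) hy, fun h => ?_⟩
  exact Nat.le_zero.mp (Nat.sInf_le (by simpa using h))

variable {Γ : V → Finset V} {n : ℕ} {x : V}

lemma posP_subset_posP_succ (n : ℕ) : PosP Γ n ⊆ PosP Γ (n + 1) := by
  induction n with
  | zero => intro x hx y hy; simp [show Γ x = ∅ from hx] at hy
  | succ n ih =>
    intro x hx y hy
    obtain ⟨z, hz, hzP⟩ := hx y hy
    exact ⟨z, hz, ih hzP⟩

lemma posP_mono : Monotone (PosP Γ) :=
  monotone_nat_of_le_succ posP_subset_posP_succ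

lemma notMem_posN_succ_of_mem_posP (hx : x ∈ PosP Γ n) : x ∉ PosN Γ (n + 1) := by
  induction n generalizing x with
  | zero => rintro ⟨y, hy, -⟩; simp [show Γ x = ∅ from hx] at hy
  | succ n ih =>
    rintro ⟨y, hy, hyP⟩
    -- descend two moves: `z ∈ Pₙ`, and `z` has an option in `Pₙ` because `y ∈ Pₙ₊₁`
    obtain ⟨z, hz, hzP⟩ := hx y hy
    obtain ⟨w, hw, hwP⟩ := hyP z hz
    exact ih hzP ⟨w, hw, hwP⟩

lemma mem_nPos_iff : x ∈ NPos Γ ↔ ∃ y ∈ Γ x, y ∈ PPos Γ := by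
  simp only [NPos, PPos, Set.mem_iUnion]
  constructor
  · rintro ⟨_ | n, hn⟩
    · exact hn.elim
    · obtain ⟨y, hy, hyP⟩ := hn
      exact ⟨y, hy, n, hyP⟩
  · rintro ⟨y, hy, n, hyP⟩
    exact ⟨n + 1, y, hy, hyP⟩

lemma gfun_succ_eq_mexF
    (h : ∀ y ∈ Γ x, Gfun Γ n y ≤ mexF (Γ x) (Gfun Γ n) ∨
      ∃ z ∈ Γ y, Gfun Γ n z = mexF (Γ x) (Gfun Γ n)) :
    Gfun Γ (n + 1) x = mexF (Γ x) (Gfun Γ n) :=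
  if_pos h

lemma mexF_eq_of_gfun_succ_eq {m : ℕ} (h : Gfun Γ (n + 1) x = m) :
    mexF (Γ x) (Gfun Γ n) = m ∧
      ∀ y ∈ Γ x, Gfun Γ n y ≤ m ∨ ∃ z ∈ Γ y, Gfun Γ n z = m := by
  simp only [Gfun] at h
  split_ifs at h with hc
  · obtain rfl : mexF (Γ x) (Gfun Γ n) = m := by exact_mod_cast h
    exact ⟨rfl, hc⟩
  · exact absurd h.symm (ENat.natCast_ne_top m)

lemma gfun_succ_eq_zero_iff :
    Gfun Γ (n + 1) x = 0 ↔ ∀ y ∈ Γ x, Gfun Γ n y ≠ 0 ∧ ∃ z ∈ Γ y, Gfun Γ n z = 0 := by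
  constructor
  · intro h
    obtain ⟨hmex, hc⟩ := mexF_eq_of_gfun_succ_eq (m := 0) h
    intro y hy
    have hy0 : Gfun Γ n y ≠ 0 := mexF_eq_zero_iff.mp hmex y hy
    refine ⟨hy0, (hc y hy).resolve_left ?_⟩
    simpa using hy0
  · intro h
    have hmex : mexF (Γ x) (Gfun Γ n) = 0 := mexF_eq_zero_iff.mpr fun y hy => (h y hy).1
    rw [gfun_succ_eq_mexF, hmex, Nat.cast_zero]
    intro y hy
    simpa [hmex] using Or.inr (h y hy).2

lemma gfun_eq_zero_iff : Gfun Γ n x = 0 ↔ x ∈ PosP Γ n := by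
  induction n generalizing x with
  | zero => simp [Gfun, PosP]
  | succ n ih =>
    rw [gfun_succ_eq_zero_iff]
    refine forall₂_congr fun y hy => ?_
    simp only [ne_eq, ih]
    refine and_iff_right_of_imp fun ⟨z, hz, hzP⟩ hyP => ?_
    exact notMem_posN_succ_of_mem_posP hyP ⟨z, hz, hzP⟩

lemma exists_gfun_eq_zero_of_gfun_succ_eq {m : ℕ} (hm : 0 < m)
    (h : Gfun Γ (n + 1) x = m) : ∃ y ∈ Γ x, Gfun Γ n y = 0 := by
  obtain ⟨hmex, -⟩ := mexF_eq_of_gfun_succ_eq h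
  simpa using exists_apply_eq_of_lt_mexF (g := Gfun Γ n) (k := 0) (hmex ▸ hm)

lemma mem_nPos_of_gfun_succ_eq {m : ℕ} (hm : 0 < m) (h : Gfun Γ (n + 1) x = m) :
    x ∈ NPos Γ := by
  obtain ⟨y, hy, hy0⟩ := exists_gfun_eq_zero_of_gfun_succ_eq hm h
  exact Set.mem_iUnion.mpr ⟨n + 1, y, hy, gfun_eq_zero_iff.mp hy0⟩

lemma hasGVal_zero_iff : HasGVal Γ x 0 ↔ x ∈ PPos Γ := by
  simp only [HasGVal, PPos, Set.mem_iUnion, Nat.cast_zero, gfun_eq_zero_iff]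
  exact ⟨fun ⟨n, hn⟩ => ⟨n, hn n le_rfl⟩, fun ⟨n, hn⟩ => ⟨n, fun _ hk => posP_mono hk hn⟩⟩

lemma zero_mem_valSet_iff : 0 ∈ ValSet Γ x ↔ x ∈ NPos Γ := by
  simp only [ValSet, Set.mem_ofPred_eq, hasGVal_zero_iff, mem_nPos_iff]

lemma mem_pPos_union_nPos_of_gfun_ne_top (h : Gfun Γ n x ≠ ⊤) : x ∈ PPos Γ ∪ NPos Γ := by
  obtain ⟨m, hm⟩ := ENat.ne_top_iff_exists.mp h
  rcases Nat.eq_zero_or_pos m with rfl | hpos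
  · exact Or.inl (Set.mem_iUnion.mpr ⟨n, gfun_eq_zero_iff.mp (by simpa using hm.symm)⟩)
  cases n with
  | zero =>
    refine absurd hm ?_
    unfold Gfun
    split_ifs <;> simp [hpos.ne']
  | succ n => exact Or.inr (mem_nPos_of_gfun_succ_eq hpos hm.symm)

lemma notMem_pPos_of_infiniteRank (h : InfiniteRank Γ x) : x ∉ PPos Γ := by
  rintro hx
  obtain ⟨n, hn⟩ := hasGVal_zero_iff.mpr hx
  simpa [h n] using hn n le_rfl

lemma infiniteRank_of_mem_dPos (h : x ∈ DPos Γ) : InfiniteRank Γ x := fun _ =>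
  not_not.mp fun hn => h (mem_pPos_union_nPos_of_gfun_ne_top hn)

end

/-- (a) `𝒢(x) = 0` iff `x ∈ 𝒫`; (b) if `𝒢(x)` is a positive
integer then `x ∈ 𝒩`; (c) if `𝒢(x) = ∞(𝒜)` with `0 ∈ 𝒜` then `x ∈ 𝒩`;
(d) `𝒢(x) = ∞(𝒜)` with `0 ∉ 𝒜` iff `x ∈ 𝒟`. -/
theorem stmt2 {V : Type*} (Γ : V → Finset V) (x : V) :
    (HasGVal Γ x 0 ↔ x ∈ PPos Γ) ∧
    (∀ m : ℕ, 0 < m → HasGVal Γ x m → x ∈ NPos Γ) ∧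
    (InfiniteRank Γ x → 0 ∈ ValSet Γ x → x ∈ NPos Γ) ∧
    ((InfiniteRank Γ x ∧ 0 ∉ ValSet Γ x) ↔ x ∈ DPos Γ) := by
  refine ⟨hasGVal_zero_iff, ?_, fun _ h => zero_mem_valSet_iff.mp h, ?_⟩
  · rintro m hm ⟨n, hn⟩
    exact mem_nPos_of_gfun_succ_eq hm (hn (n + 1) n.le_succ)
  · rw [zero_mem_valSet_iff]
    constructor
    · rintro ⟨hinf, hN⟩ (hP | hN')
      exacts [notMem_pPos_of_infiniteRank hinf hP, hN hN']
    · exact fun hD => ⟨infiniteRank_of_mem_dPos hD, fun hN => hD (Or.inr hN)⟩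
end

section
/- Let V be a locally finite game graph and let x be a position of R(V). If x has finite rank in V, then x has finite rank in R(V), and 𝒢_{R(V)}(x) = 𝒢_V(x) − 1. -/
open scoped Classical

universe u

/-!
Induction on the stage `n` at which `𝒢ₙ(x) = m` is reached. A position with a finite value `0`
lies in `𝒫`, and a position of `𝒫` has no finite value other than `0`; so `x ∉ 𝒫` forces `m ≥ 1`,
and passing to `R(V)` deletes exactly the options of value `0` while, by induction, every surviving
option of value `j` gets value `j - 1` in `R(V)`. Hence the mex drops from `m` to `m - 1`, and the
second clause in the definition of `𝒢ₙ₊₁` survives because its witnesses have value `m ≥ 1`.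
Since finite values of the approximants persist, reaching `m - 1` at a single stage suffices.
-/

open Filter

section

variable {V : Type*}

lemma mexF_eq_iff {s : Finset V} {g : V → ℕ∞} {k : ℕ} :
    mexF s g = k ↔ (∀ y ∈ s, g y ≠ k) ∧ ∀ j < k, ∃ y ∈ s, g y = j := by
  have hne : {n : ℕ | ∀ y ∈ s, g y ≠ n}.Nonempty := by
    obtain ⟨n, hn⟩ := Infinite.exists_notMem_finset ((s.image g).preimage
      (fun n : ℕ => (n : ℕ∞)) Nat.cast_injective.injOn)
    exact ⟨n, fun y hy hgy => hn (Finset.mem_preimage.2 (Finset.mem_image.2 ⟨y, hy, hgy⟩))⟩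
  constructor
  · rintro rfl
    refine ⟨Nat.sInf_mem hne, fun j hj => ?_⟩
    by_contra! h
    exact Nat.notMem_of_lt_sInf hj h
  · rintro ⟨hk, hlt⟩
    refine le_antisymm (Nat.sInf_le hk) (not_lt.1 fun hlt' => ?_)
    obtain ⟨y, hy, hgy⟩ := hlt _ hlt'
    exact Nat.sInf_mem hne y hy hgy

variable (Γ : V → Finset V)

lemma gfun_zero_eq_natCast_iff {x : V} {m : ℕ} : Gfun Γ 0 x = m ↔ Γ x = ∅ ∧ m = 0 := by
  simp only [Gfun]
  split_ifs with hx <;> simp [hx, eq_comm]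

lemma gfun_succ_eq_natCast_iff {n : ℕ} {x : V} {m : ℕ} :
    Gfun Γ (n + 1) x = m ↔ mexF (Γ x) (Gfun Γ n) = m ∧
      ∀ y ∈ Γ x, Gfun Γ n y ≤ m ∨ ∃ z ∈ Γ y, Gfun Γ n z = m := by
  simp only [Gfun]
  split_ifs with hc
  · rw [Nat.cast_inj]
    exact ⟨fun h => ⟨h, h ▸ hc⟩, And.left⟩
  · simp only [ENat.top_ne_natCast, false_iff, not_and]
    rintro rfl
    exact hc

lemma gfun_succ_of_eq_natCast {n : ℕ} {x : V} {m : ℕ} (h : Gfun Γ n x = m) :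
    Gfun Γ (n + 1) x = m := by
  induction n generalizing x m with
  | zero =>
    obtain ⟨hx, rfl⟩ := (gfun_zero_eq_natCast_iff Γ).1 h
    exact (gfun_succ_eq_natCast_iff Γ).2 ⟨mexF_eq_iff.2 ⟨by simp [hx], by simp⟩, by simp [hx]⟩
  | succ n ih =>
    obtain ⟨hmex, hc⟩ := (gfun_succ_eq_natCast_iff Γ).1 h
    obtain ⟨hne, hatt⟩ := mexF_eq_iff.1 hmex
    refine (gfun_succ_eq_natCast_iff Γ).2
      ⟨mexF_eq_iff.2 ⟨fun y hy hym => ?_, fun j hj => ?_⟩, fun y hy => ?_⟩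
    · rcases hc y hy with hle | ⟨z, hz, hzm⟩
      · obtain ⟨v, hv, -⟩ := ENat.le_natCast_iff.1 hle
        exact hne y hy (hv.trans ((ih hv).symm.trans hym))
      · exact (mexF_eq_iff.1 ((gfun_succ_eq_natCast_iff Γ).1 hym).1).1 z hz hzm
    · obtain ⟨y, hy, hyj⟩ := hatt j hj
      exact ⟨y, hy, ih hyj⟩
    · rcases hc y hy with hle | ⟨z, hz, hzm⟩
      · obtain ⟨v, hv, hvm⟩ := ENat.le_natCast_iff.1 hle
        exact Or.inl ((ih hv).trans_le (Nat.cast_le.2 hvm))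
      · exact Or.inr ⟨z, hz, ih hzm⟩

lemma hasGVal_of_gfun_eq_natCast {n : ℕ} {x : V} {m : ℕ} (h : Gfun Γ n x = m) :
    HasGVal Γ x m := by
  refine ⟨n, fun k hk => ?_⟩
  induction k, hk using Nat.le_induction with
  | base => exact h
  | succ k _ ih => exact gfun_succ_of_eq_natCast Γ ih

lemma gfun_ne_of_mem_of_gfun_eq {k : ℕ} {y z : V} {j : ℕ} (hz : z ∈ Γ y)
    (hzj : Gfun Γ k z = j) : Gfun Γ k y ≠ j := fun hyj =>
  (mexF_eq_iff.1 ((gfun_succ_eq_natCast_iff Γ).1 (gfun_succ_of_eq_natCast Γ hyj)).1).1 z hz hzj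

lemma notMem_posP_of_mem_posP {a b : ℕ} {x y : V} (hx : x ∈ PosP Γ a) (hy : y ∈ Γ x) :
    y ∉ PosP Γ b := by
  induction a generalizing b x y with
  | zero =>
    have hx : Γ x = ∅ := hx
    simp [hx] at hy
  | succ a ih =>
    intro hyb
    obtain ⟨z, hz, hza⟩ := hx y hy
    cases b with
    | zero =>
      have hyb : Γ y = ∅ := hyb
      simp [hyb] at hz
    | succ b =>
      obtain ⟨w, hw, hwb⟩ := hyb z hz
      exact ih hza hw hwb

lemma mem_posP_of_gfun_eq_zero {n : ℕ} {x : V} (h : Gfun Γ n x = (0 : ℕ)) : x ∈ PosP Γ n := by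
  induction n generalizing x with
  | zero => exact ((gfun_zero_eq_natCast_iff Γ).1 h).1
  | succ n ih =>
    obtain ⟨hmex, hc⟩ := (gfun_succ_eq_natCast_iff Γ).1 h
    intro y hy
    rcases hc y hy with hle | ⟨z, hz, hz0⟩
    · exact absurd (by simpa using hle) ((mexF_eq_iff.1 hmex).1 y hy)
    · exact ⟨z, hz, ih hz0⟩

lemma gfun_eq_zero_of_mem_posP {a k : ℕ} {y : V} {j : ℕ} (hy : y ∈ PosP Γ a)
    (h : Gfun Γ k y = j) : j = 0 := by
  cases k with
  | zero => exact ((gfun_zero_eq_natCast_iff Γ).1 h).2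
  | succ k =>
    by_contra hj
    obtain ⟨w, hw, hw0⟩ :=
      (mexF_eq_iff.1 ((gfun_succ_eq_natCast_iff Γ).1 h).1).2 0 (Nat.pos_of_ne_zero hj)
    exact notMem_posP_of_mem_posP Γ hy hw (mem_posP_of_gfun_eq_zero Γ hw0)

lemma notMem_pPos_of_gfun_eq {k : ℕ} {y : V} {j : ℕ} (hj : 0 < j) (h : Gfun Γ k y = j) :
    y ∉ PPos Γ := by
  simp only [PPos, Set.mem_iUnion, not_exists]
  exact fun a hy => hj.ne' (gfun_eq_zero_of_mem_posP Γ hy h)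

lemma pos_of_gfun_eq_of_notMem_pPos {n : ℕ} {x : V} {m : ℕ} (hx : x ∉ PPos Γ)
    (h : Gfun Γ n x = m) : 0 < m := by
  refine Nat.pos_of_ne_zero fun hm => hx (Set.mem_iUnion.2 ⟨n, ?_⟩)
  exact mem_posP_of_gfun_eq_zero Γ (hm ▸ h)

lemma mem_reducedGraph {x y : {x : V // x ∉ PPos Γ}} : y ∈ reducedGraph Γ x ↔ y.1 ∈ Γ x.1 :=
  Finset.mem_subtype

def GValDropsAt (n : ℕ) : Prop :=
  ∀ (x : V) (hx : x ∉ PPos Γ) (m : ℕ), Gfun Γ n x = m → HasGVal (reducedGraph Γ) ⟨x, hx⟩ (m - 1)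

variable {Γ}

lemma GValDropsAt.eventually_exists_option_gfun_eq {n : ℕ} (ih : GValDropsAt Γ n) {x : V}
    (hx : x ∉ PPos Γ) {m : ℕ} (h : Gfun Γ (n + 1) x = m) :
    ∀ j < m - 1, ∀ᶠ k in atTop,
      ∃ y ∈ reducedGraph Γ ⟨x, hx⟩, Gfun (reducedGraph Γ) k y = j := by
  intro j hj
  obtain ⟨y, hy, hyj⟩ :=
    (mexF_eq_iff.1 ((gfun_succ_eq_natCast_iff Γ).1 h).1).2 (j + 1) (by omega)
  have hyP := notMem_pPos_of_gfun_eq Γ j.succ_pos hyj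
  refine (eventually_atTop.2 (ih y hyP _ hyj)).mono fun k hk => ⟨⟨y, hyP⟩, ?_, ?_⟩
  · exact (mem_reducedGraph Γ).2 hy
  · simpa using hk

lemma GValDropsAt.eventually_option_gfun {n : ℕ} (ih : GValDropsAt Γ n) {x : V}
    (hx : x ∉ PPos Γ) {m : ℕ} (h : Gfun Γ (n + 1) x = m) :
    ∀ y ∈ reducedGraph Γ ⟨x, hx⟩, ∀ᶠ k in atTop,
      Gfun (reducedGraph Γ) k y ≠ (m - 1 : ℕ) ∧
        (Gfun (reducedGraph Γ) k y ≤ (m - 1 : ℕ) ∨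
          ∃ z ∈ reducedGraph Γ y, Gfun (reducedGraph Γ) k z = (m - 1 : ℕ)) := by
  intro y hy
  obtain ⟨hmex, hc⟩ := (gfun_succ_eq_natCast_iff Γ).1 h
  have hyx : y.1 ∈ Γ x := (mem_reducedGraph Γ).1 hy
  rcases hc y.1 hyx with hle | ⟨z, hz, hzm⟩
  · obtain ⟨v, hv, hvm⟩ := ENat.le_natCast_iff.1 hle
    have hvm' : v ≠ m := fun hvm' => (mexF_eq_iff.1 hmex).1 _ hyx (hvm' ▸ hv)
    have hv0 := pos_of_gfun_eq_of_notMem_pPos Γ y.2 hv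
    refine (eventually_atTop.2 (ih y.1 y.2 v hv)).mono fun k hk => ?_
    rw [hk, Ne, Nat.cast_inj, Nat.cast_le]
    omega
  · have hzP := notMem_pPos_of_gfun_eq Γ (pos_of_gfun_eq_of_notMem_pPos Γ hx h) hzm
    have hz : (⟨z, hzP⟩ : {x : V // x ∉ PPos Γ}) ∈ reducedGraph Γ y := (mem_reducedGraph Γ).2 hz
    refine (eventually_atTop.2 (ih z hzP m hzm)).mono fun k hk => ?_
    exact ⟨gfun_ne_of_mem_of_gfun_eq _ hz hk, Or.inr ⟨_, hz, hk⟩⟩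

lemma GValDropsAt.succ {n : ℕ} (ih : GValDropsAt Γ n) : GValDropsAt Γ (n + 1) := by
  intro x hx m h
  have hatt := (eventually_all_finite (Set.finite_Iio (m - 1))).2
    (ih.eventually_exists_option_gfun_eq hx h)
  have hopt := (eventually_all_finset _).2 (ih.eventually_option_gfun hx h)
  obtain ⟨k, hkatt, hkopt⟩ := (hatt.and hopt).exists
  refine hasGVal_of_gfun_eq_natCast _ (n := k + 1) ((gfun_succ_eq_natCast_iff _).2 ⟨?_, ?_⟩)
  · exact mexF_eq_iff.2 ⟨fun y hy => (hkopt y hy).1, hkatt⟩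
  · exact fun y hy => (hkopt y hy).2

lemma gValDropsAt_zero : GValDropsAt Γ 0 := fun _ hx _ h =>
  absurd (Set.mem_iUnion.2 ⟨0, ((gfun_zero_eq_natCast_iff Γ).1 h).1⟩) hx

lemma gValDropsAt (n : ℕ) : GValDropsAt Γ n :=
  Nat.rec gValDropsAt_zero (fun _ ih => ih.succ) n

end

/-- if `x` is a position of `R(V)` of finite rank in `V` with
`𝒢_V(x) = m`, then `x` has finite rank in `R(V)` with
`𝒢_{R(V)}(x) = 𝒢_V(x) − 1`. -/
theorem stmt9 {V : Type*} (Γ : V → Finset V) (x : V) (hx : x ∉ PPos Γ)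
    (m : ℕ) (h : HasGVal Γ x m) :
    HasGVal (reducedGraph Γ) ⟨x, hx⟩ (m - 1) := by
  obtain ⟨n, hn⟩ := h
  exact gValDropsAt n x hx m (hn n le_rfl)
end
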